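/- arXiv:2411.09987 — 2 statements merged into one kernel-verified Lean document; each statement's English description precedes it below -/
import Mathlib

section
/- Let M be a simple matroid with Cremona basis b, and let F be a connected flat of M of rank 2 with F ∩ b = ∅. Then the support graph G_b(F) is a triangle: it has exactly 3 vertices and exactly 3 edges, one between each pair of vertices. -/
/-!
Every point of `F` lies on some line `Fij` spanned by a pair of basis elements, and since
the rank-2 flat `F` is spanned by any two of its points, each such line meets `F` at most
once (otherwise `F` would contain a basis element). If `e ≠ f` in `F` lie on the lines of
the pairs `P` and `Q`, then all of `F` lies in `cl (P ∪ Q)`; as `b` is independent,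
closures of subsets of `b` intersect like the subsets themselves, so the pair of any
`g ∈ F` is contained in `P ∪ Q` (otherwise `g` would lie in the closure of at most one
point). Connectivity gives three points of `F`, and three distinct pairs each contained
in the union of the other two form a triangle.
-/

open Set

variable {α : Type*}

/-- The set of non-basis elements on the line through `x` and `y`. -/
def Fij (M : Matroid α) (x y : α) : Set α := M.closure {x, y} \ {x, y}

/-- `b` is a Cremona basis: a base of `M` such that the sets
`Fij = cl{bᵢ,bⱼ} \ {bᵢ,bⱼ}` are pairwise disjoint with union `M.E \ b`. -/
def IsCremonaBasis (M : Matroid α) (b : Set α) : Prop :=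
  M.IsBase b ∧
  (∀ x ∈ b, ∀ y ∈ b, ∀ x' ∈ b, ∀ y' ∈ b, x ≠ y → x' ≠ y' →
    ({x, y} : Set α) ≠ {x', y'} → Disjoint (Fij M x y) (Fij M x' y')) ∧
  (⋃ x ∈ b, ⋃ y ∈ b, ⋃ _ : x ≠ y, Fij M x y) = M.E \ b

/-- The `b`-support of a set `S`. -/
def suppb (M : Matroid α) (b S : Set α) : Set α :=
  (b ∩ S) ∪ ⋃ x ∈ b, ⋃ y ∈ b, ⋃ _ : x ≠ y, ⋃ _ : (S ∩ Fij M x y).Nonempty, ({x, y} : Set α)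

/-- Adjacency in the support graph `G_b(S)`: there is an edge between `x` and `y`
for each element of `S ∩ Fij M x y`. -/
def Adjb (M : Matroid α) (b S : Set α) (x y : α) : Prop :=
  x ∈ b ∧ y ∈ b ∧ x ≠ y ∧ (S ∩ Fij M x y).Nonempty

/-- The support graph `G_b(S)` is connected. -/
def SuppConnected (M : Matroid α) (b S : Set α) : Prop :=
  ∀ x ∈ suppb M b S, ∀ y ∈ suppb M b S, Relation.ReflTransGen (Adjb M b S) x y

/-- The vertex set of the connected component of `x` in the support graph `G_b(S)`. -/
def compOf (M : Matroid α) (b S : Set α) (x : α) : Set α :=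
  {y ∈ suppb M b S | Relation.ReflTransGen (Adjb M b S) x y}

/-- A matroid is simple if every pair of (not necessarily distinct) elements
of the ground set is independent. -/
def MSimple (M : Matroid α) : Prop := ∀ e ∈ M.E, ∀ f ∈ M.E, M.Indep {e, f}

/-- A circuit: a minimal dependent set. -/
def MCircuit (M : Matroid α) (C : Set α) : Prop :=
  C ⊆ M.E ∧ ¬ M.Indep C ∧ ∀ x ∈ C, M.Indep (C \ {x})

/-- A matroid is connected if its ground set is nonempty and every two distinct
elements lie on a common circuit. -/
def MConnected (M : Matroid α) : Prop :=
  M.E.Nonempty ∧ ∀ e ∈ M.E, ∀ f ∈ M.E, e = f ∨ ∃ C, MCircuit M C ∧ e ∈ C ∧ f ∈ C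

/-- The rank of a set in a matroid: the supremum of cardinalities of independent subsets. -/
noncomputable def mRank (M : Matroid α) (X : Set α) : ℕ :=
  sSup {n | ∃ I, M.Indep I ∧ I ⊆ X ∧ I.ncard = n}

section

variable {M : Matroid α} {b F S X I : Set α} {e f g p q r s t u v w x y z : α}

lemma Fij_congr (M : Matroid α) (h : ({x, y} : Set α) = {p, q}) : Fij M x y = Fij M p q := by
  rw [Fij, Fij, h]

lemma Fij_comm (M : Matroid α) (x y : α) : Fij M x y = Fij M y x :=
  Fij_congr M (pair_comm x y)

lemma Adjb.symm (h : Adjb M b S x y) : Adjb M b S y x :=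
  ⟨h.2.1, h.1, h.2.2.1.symm, Fij_comm M x y ▸ h.2.2.2⟩

lemma Adjb.of_pair_eq (h : Adjb M b S x y) (hxy : ({x, y} : Set α) = {p, q}) :
    Adjb M b S p q := by
  rcases pair_eq_pair_iff.1 hxy with ⟨rfl, rfl⟩ | ⟨rfl, rfl⟩
  exacts [h, h.symm]

lemma mem_suppb_iff_of_inter_eq_empty (hSb : S ∩ b = ∅) :
    z ∈ suppb M b S ↔ ∃ y, Adjb M b S z y := by
  simp only [suppb, mem_union, mem_iUnion, mem_insert_iff, mem_singleton_iff, exists_prop]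
  constructor
  · rintro (hz | ⟨x, hx, y, hy, hxy, hne, rfl | rfl⟩)
    · exact absurd (hSb ▸ (⟨hz.2, hz.1⟩ : z ∈ S ∩ b)) (notMem_empty z)
    · exact ⟨y, hx, hy, hxy, hne⟩
    · exact ⟨x, hy, hx, hxy.symm, Fij_comm M x z ▸ hne⟩
  · rintro ⟨y, hz, hy, hzy, hne⟩
    exact Or.inr ⟨z, hz, y, hy, hzy, hne, Or.inl rfl⟩

lemma pair_eq_of_subset (hxy : x ≠ y) (h : ({x, y} : Set α) ⊆ {p, q}) :
    ({x, y} : Set α) = {p, q} := by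
  refine eq_of_subset_of_ncard_le h ?_ (toFinite _)
  rw [ncard_pair hxy]
  exact (ncard_insert_le p {q}).trans (by rw [ncard_singleton])

lemma exists_eq_pair_of_mem_pair (hxy : x ≠ y) (hu : u ∈ ({x, y} : Set α)) :
    ∃ v, u ≠ v ∧ ({x, y} : Set α) = {u, v} := by
  rcases hu with rfl | rfl
  exacts [⟨y, hxy, rfl⟩, ⟨x, hxy.symm, pair_comm x u⟩]

lemma exists_triangle_of_pair_subset_union {x₁ y₁ x₂ y₂ x₃ y₃ : α} (h₁ : x₁ ≠ y₁)
    (h₂ : x₂ ≠ y₂) (h₁₂ : ({x₁, y₁} : Set α) ≠ {x₂, y₂}) (h₁₃ : ({x₁, y₁} : Set α) ≠ {x₃, y₃})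
    (hs₁ : ({x₁, y₁} : Set α) ⊆ {x₂, y₂} ∪ {x₃, y₃})
    (hs₂ : ({x₂, y₂} : Set α) ⊆ {x₁, y₁} ∪ {x₃, y₃}) :
    ∃ u v w, ({x₁, y₁} : Set α) = {u, v} ∧ ({x₂, y₂} : Set α) = {u, w} ∧
      ({x₃, y₃} : Set α) = {v, w} := by
  obtain ⟨u, hu₁, hu₂⟩ : ({x₁, y₁} ∩ {x₂, y₂} : Set α).Nonempty := by
    rw [← not_disjoint_iff_nonempty_inter]
    intro hdisj
    exact h₁₃ (pair_eq_of_subset h₁ fun z hz =>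
      (hs₁ hz).resolve_left (hdisj.notMem_of_mem_left hz))
  obtain ⟨v, huv, hP₁⟩ := exists_eq_pair_of_mem_pair h₁ hu₁
  obtain ⟨w, huw, hP₂⟩ := exists_eq_pair_of_mem_pair h₂ hu₂
  rw [hP₁, hP₂] at hs₁ hs₂ h₁₂
  have hvw : v ≠ w := by rintro rfl; exact h₁₂ rfl
  have hv : v ∈ ({x₃, y₃} : Set α) := by
    have := hs₁ (mem_insert_of_mem u rfl)
    simp only [mem_union, mem_insert_iff, mem_singleton_iff] at this
    tauto
  have hw : w ∈ ({x₃, y₃} : Set α) := by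
    have := hs₂ (mem_insert_of_mem u rfl)
    simp only [mem_union, mem_insert_iff, mem_singleton_iff] at this
    tauto
  exact ⟨u, v, w, hP₁, hP₂, (pair_eq_of_subset hvw (pair_subset hv hw)).symm⟩

lemma bddAbove_of_mRank_ne_zero (h : mRank M X ≠ 0) :
    BddAbove {n | ∃ I, M.Indep I ∧ I ⊆ X ∧ I.ncard = n} := by
  by_contra hbdd
  exact h (Nat.sSup_of_not_bddAbove hbdd)

lemma ncard_le_mRank (h : mRank M X ≠ 0) (hI : M.Indep I) (hIX : I ⊆ X) :
    I.ncard ≤ mRank M X :=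
  le_csSup (bddAbove_of_mRank_ne_zero h) ⟨I, hI, hIX, rfl⟩

lemma exists_indep_ncard_eq_mRank (h : mRank M X ≠ 0) :
    ∃ I, M.Indep I ∧ I ⊆ X ∧ I.ncard = mRank M X :=
  Nat.sSup_mem (s := {n | ∃ I, M.Indep I ∧ I ⊆ X ∧ I.ncard = n})
    ⟨0, ∅, M.empty_indep, empty_subset X, ncard_empty α⟩ (bddAbove_of_mRank_ne_zero h)

namespace MSimple

lemma notMem_closure_of_subsingleton (hM : MSimple M) (hS : S.Subsingleton) (hSE : S ⊆ M.E)
    (hg : g ∈ M.E) (hgS : g ∉ S) : g ∉ M.closure S := by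
  have hind : M.Indep (insert g S) := by
    rcases hS.eq_empty_or_singleton with rfl | ⟨x, rfl⟩
    · simpa using hM g hg g hg
    · exact hM g hg x (hSE rfl)
  simpa [hgS] using hind.notMem_closure_sdiff_of_mem (mem_insert g S)

lemma notMem_closure_singleton (hM : MSimple M) (hx : x ∈ M.E) (hg : g ∈ M.E) (hgx : g ≠ x) :
    g ∉ M.closure {x} :=
  hM.notMem_closure_of_subsingleton subsingleton_singleton (singleton_subset_iff.2 hx) hg hgx

lemma mem_closure_pair_of_mem_Fij (hM : MSimple M) (hy : y ∈ M.E) (he : e ∈ Fij M x y)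
    (hf : f ∈ M.closure {x, y}) (hef : e ≠ f) : y ∈ M.closure {e, f} := by
  have heE := M.closure_subset_ground _ he.1
  have hfE := M.closure_subset_ground _ hf
  have hey : e ≠ y := fun h => he.2 (h ▸ mem_insert_of_mem x rfl)
  have hx : x ∈ M.closure {e, y} :=
    (M.closure_exchange ⟨he.1, hM.notMem_closure_singleton hy heE hey⟩).1
  have hf' : f ∈ M.closure {y, e} := by
    rw [pair_comm]
    exact M.closure_subset_closure_of_subset_closure
      (pair_subset hx (M.mem_closure_of_mem' (mem_insert_of_mem e rfl) hy)) hf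
  rw [pair_comm]
  exact (M.closure_exchange ⟨hf', hM.notMem_closure_singleton heE hfE hef.symm⟩).1

lemma pair_subset_of_mem_closure (hM : MSimple M) (hI : M.Indep ({x, y} ∪ S))
    (hg : g ∈ Fij M x y) (hgS : g ∈ M.closure S) : ({x, y} : Set α) ⊆ S := by
  by_contra hxyS
  have hg' : g ∈ M.closure ({x, y} ∩ S) := by
    rw [hI.closure_inter_eq_inter_closure]
    exact ⟨hg.1, hgS⟩
  have hsub : ({x, y} ∩ S : Set α).Subsingleton := by
    obtain ⟨z, hz, hzS⟩ := not_subset.1 hxyS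
    rcases hz with rfl | rfl
    · exact (subsingleton_singleton (a := y)).anti fun a ⟨ha, haS⟩ =>
        ha.resolve_left (by rintro rfl; exact hzS haS)
    · exact (subsingleton_singleton (a := x)).anti fun a ⟨ha, haS⟩ =>
        ha.resolve_right (by rintro rfl; exact hzS haS)
  exact hM.notMem_closure_of_subsingleton hsub
    (inter_subset_left.trans (subset_union_left.trans hI.subset_ground))
    (M.closure_subset_ground _ hg.1) (fun h => hg.2 h.1) hg'

end MSimple

lemma closure_pair_eq_of_mRank_eq_two (hM : MSimple M) (hF : M.IsFlat F) (hrk : mRank M F = 2)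
    (he : e ∈ F) (hf : f ∈ F) (hef : e ≠ f) : M.closure {e, f} = F := by
  refine (hF.closure ▸ M.closure_subset_closure (pair_subset he hf)).antisymm fun g hg => ?_
  by_contra hgcl
  have hind : M.Indep {e, f} := hM e (hF.subset_ground he) f (hF.subset_ground hf)
  have hge : g ∉ ({e, f} : Set α) := fun h => hgcl (M.subset_closure _ hind.subset_ground h)
  have hind₃ : M.Indep (insert g {e, f}) :=
    hind.insert_indep_iff.2 (Or.inl ⟨hF.subset_ground hg, hgcl⟩)
  have h₃ := ncard_le_mRank (hrk ▸ two_ne_zero) hind₃ (insert_subset hg (pair_subset he hf))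
  rw [hrk, ncard_insert_of_notMem hge, ncard_pair hef] at h₃
  omega

lemma subsingleton_inter_Fij (hM : MSimple M) (hF : M.IsFlat F) (hrk : mRank M F = 2)
    (hy : y ∈ M.E) (hyF : y ∉ F) : (F ∩ Fij M x y).Subsingleton := by
  intro e ⟨heF, he⟩ f ⟨hfF, hf⟩
  by_contra hef
  apply hyF
  rw [← closure_pair_eq_of_mRank_eq_two hM hF hrk heF hfF hef]
  exact hM.mem_closure_pair_of_mem_Fij hy he hf.1 hef

lemma pair_subset_union_of_mem_Fij (hM : MSimple M) (hb : M.Indep b) (hF : M.IsFlat F)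
    (hrk : mRank M F = 2) (he : e ∈ F ∩ Fij M p q) (hf : f ∈ F ∩ Fij M r s) (hef : e ≠ f)
    (hpqrs : ({p, q} ∪ {r, s} : Set α) ⊆ b) (htw : Adjb M b F t w) :
    ({t, w} : Set α) ⊆ {p, q} ∪ {r, s} := by
  obtain ⟨ht, hw, -, g, hgF, hg⟩ := htw
  have hF_sub : F ⊆ M.closure ({p, q} ∪ {r, s}) := by
    rw [← closure_pair_eq_of_mRank_eq_two hM hF hrk he.1 hf.1 hef]
    exact M.closure_subset_closure_of_subset_closure
      (pair_subset (M.closure_subset_closure subset_union_left he.2.1)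
        (M.closure_subset_closure subset_union_right hf.2.1))
  exact hM.pair_subset_of_mem_closure (hb.subset (union_subset (pair_subset ht hw) hpqrs)) hg
    (hF_sub hgF)

lemma exists_three_mem_of_mRank_eq_two (hM : MSimple M) (hFE : F ⊆ M.E) (hrk : mRank M F = 2)
    (hconn : MConnected (M.restrict F)) :
    ∃ a c g, a ∈ F ∧ c ∈ F ∧ g ∈ F ∧ a ≠ c ∧ a ≠ g ∧ c ≠ g := by
  obtain ⟨I, -, hIF, hI⟩ := exists_indep_ncard_eq_mRank (hrk ▸ two_ne_zero : mRank M F ≠ 0)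
  obtain ⟨a, c, hac, rfl⟩ := ncard_eq_two.1 (hI.trans hrk)
  have haF : a ∈ F := hIF (mem_insert a _)
  have hcF : c ∈ F := hIF (mem_insert_of_mem a rfl)
  obtain hac' | ⟨C, ⟨hCF, hCdep, -⟩, haC, hcC⟩ := hconn.2 a haF c hcF
  · exact absurd hac' hac
  obtain ⟨g, hgC, hgac⟩ := not_subset.1 fun h : C ⊆ {a, c} =>
    hCdep (Matroid.restrict_indep_iff.2 ⟨(hM a (hFE haF) c (hFE hcF)).subset h, hCF⟩)
  have hgF : g ∈ F := hCF hgC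
  simp only [mem_insert_iff, mem_singleton_iff, not_or] at hgac
  exact ⟨a, c, g, haF, hcF, hgF, hac, Ne.symm hgac.1, Ne.symm hgac.2⟩

lemma IsCremonaBasis.exists_mem_Fij (hb : IsCremonaBasis M b) (he : e ∈ M.E) (heb : e ∉ b) :
    ∃ x ∈ b, ∃ y ∈ b, x ≠ y ∧ e ∈ Fij M x y := by
  have : e ∈ ⋃ x ∈ b, ⋃ y ∈ b, ⋃ _ : x ≠ y, Fij M x y := hb.2.2 ▸ ⟨he, heb⟩
  simpa only [mem_iUnion, exists_prop] using this

lemma exists_triangle (hM : MSimple M) (hb : IsCremonaBasis M b) (hF : M.IsFlat F)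
    (hFconn : MConnected (M.restrict F)) (hrk : mRank M F = 2) (hFb : F ∩ b = ∅) :
    ∃ u v w, Adjb M b F u v ∧ Adjb M b F u w ∧ Adjb M b F v w ∧
      ∀ x y, Adjb M b F x y → x ∈ ({u, v, w} : Set α) := by
  have hbi := hb.1.indep
  have hFE := hF.subset_ground
  have hdisj : Disjoint F b := disjoint_iff_inter_eq_empty.2 hFb
  obtain ⟨a, c, g, haF, hcF, hgF, hac, hag, hcg⟩ :=
    exists_three_mem_of_mRank_eq_two hM hFE hrk hFconn
  have hpair : ∀ e ∈ F, ∃ x ∈ b, ∃ y ∈ b, x ≠ y ∧ e ∈ Fij M x y := fun e he =>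
    hb.exists_mem_Fij (hFE he) (hdisj.notMem_of_mem_left he)
  obtain ⟨x₁, hx₁, y₁, hy₁, hxy₁, ha⟩ := hpair a haF
  obtain ⟨x₂, hx₂, y₂, hy₂, hxy₂, hc⟩ := hpair c hcF
  obtain ⟨x₃, hx₃, y₃, hy₃, hxy₃, hg⟩ := hpair g hgF
  have hadj₁ : Adjb M b F x₁ y₁ := ⟨hx₁, hy₁, hxy₁, a, haF, ha⟩
  have hadj₂ : Adjb M b F x₂ y₂ := ⟨hx₂, hy₂, hxy₂, c, hcF, hc⟩
  have hadj₃ : Adjb M b F x₃ y₃ := ⟨hx₃, hy₃, hxy₃, g, hgF, hg⟩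
  have hsub₁ := subsingleton_inter_Fij (x := x₁) hM hF hrk (hbi.subset_ground hy₁)
    (hdisj.notMem_of_mem_right hy₁)
  have h₁₂ : ({x₁, y₁} : Set α) ≠ {x₂, y₂} := fun h =>
    hac (hsub₁ ⟨haF, ha⟩ ⟨hcF, Fij_congr M h ▸ hc⟩)
  have h₁₃ : ({x₁, y₁} : Set α) ≠ {x₃, y₃} := fun h =>
    hag (hsub₁ ⟨haF, ha⟩ ⟨hgF, Fij_congr M h ▸ hg⟩)
  have hb₁ : ({x₁, y₁} : Set α) ⊆ b := pair_subset hx₁ hy₁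
  have hb₂ : ({x₂, y₂} : Set α) ⊆ b := pair_subset hx₂ hy₂
  have hb₃ : ({x₃, y₃} : Set α) ⊆ b := pair_subset hx₃ hy₃
  have hs₁ := pair_subset_union_of_mem_Fij hM hbi hF hrk ⟨hcF, hc⟩ ⟨hgF, hg⟩ hcg
    (union_subset hb₂ hb₃) hadj₁
  have hs₂ := pair_subset_union_of_mem_Fij hM hbi hF hrk ⟨haF, ha⟩ ⟨hgF, hg⟩ hag
    (union_subset hb₁ hb₃) hadj₂
  obtain ⟨u, v, w, hP₁, hP₂, hP₃⟩ :=
    exists_triangle_of_pair_subset_union hxy₁ hxy₂ h₁₂ h₁₃ hs₁ hs₂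
  refine ⟨u, v, w, hadj₁.of_pair_eq hP₁, hadj₂.of_pair_eq hP₂, hadj₃.of_pair_eq hP₃,
    fun x y hxy => ?_⟩
  have hx := pair_subset_union_of_mem_Fij hM hbi hF hrk ⟨haF, ha⟩ ⟨hcF, hc⟩ hac
    (union_subset hb₁ hb₂) hxy (mem_insert x {y})
  rw [hP₁, hP₂] at hx
  simp only [mem_union, mem_insert_iff, mem_singleton_iff] at hx ⊢
  tauto

end

theorem stmt3_general (M : Matroid α) (hsimple : MSimple M)
    (b : Set α) (hb : IsCremonaBasis M b)
    (F : Set α) (hF : M.IsFlat F) (hFconn : MConnected (M.restrict F))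
    (hrk : mRank M F = 2) (hFb : F ∩ b = ∅) :
    (suppb M b F).ncard = 3 ∧
      ∀ x ∈ suppb M b F, ∀ y ∈ suppb M b F, x ≠ y → ∃! e, e ∈ F ∩ Fij M x y := by
  obtain ⟨u, v, w, huv, huw, hvw, hbound⟩ := exists_triangle hsimple hb hF hFconn hrk hFb
  have hsupp : suppb M b F = {u, v, w} := by
    ext z
    rw [mem_suppb_iff_of_inter_eq_empty hFb]
    refine ⟨fun ⟨y, hzy⟩ => hbound z y hzy, ?_⟩
    rintro (rfl | rfl | rfl)
    exacts [⟨v, huv⟩, ⟨_, huv.symm⟩, ⟨_, huw.symm⟩]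
  refine ⟨?_, fun x hx y hy hxy => ?_⟩
  · rw [hsupp, ncard_eq_three]
    exact ⟨u, v, w, huv.2.2.1, huw.2.2.1, hvw.2.2.1, rfl⟩
  rw [hsupp] at hx hy
  have hadj : Adjb M b F x y := by
    rcases hx with rfl | rfl | rfl <;> rcases hy with rfl | rfl | rfl <;>
      first
        | exact absurd rfl hxy
        | assumption
        | exact Adjb.symm ‹_›
  obtain ⟨-, hy, -, e, he⟩ := hadj
  exact ⟨e, he, fun e' he' => subsingleton_inter_Fij hsimple hF hrk (hb.1.subset_ground hy)
    ((disjoint_iff_inter_eq_empty.2 hFb).notMem_of_mem_right hy) he' he⟩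

/-- A connected rank-2 non-basis flat has support graph a triangle:
exactly 3 vertices, and exactly one edge between each pair of vertices. -/
theorem stmt3 (M : Matroid α) (hfin : M.E.Finite) (hsimple : MSimple M)
    (b : Set α) (hb : IsCremonaBasis M b)
    (F : Set α) (hF : M.IsFlat F) (hFconn : MConnected (M.restrict F))
    (hrk : mRank M F = 2) (hFb : F ∩ b = ∅) :
    (suppb M b F).ncard = 3 ∧
      ∀ x ∈ suppb M b F, ∀ y ∈ suppb M b F, x ≠ y → ∃! e, e ∈ F ∩ Fij M x y :=
  stmt3_general M hsimple b hb F hF hFconn hrk hFb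
end

section
/- Let M be a simple matroid with Cremona basis b. Every basis flat F (i.e., a nonempty flat with connected support graph and F ∩ b = supp_b(F)) satisfies r(F) = |F ∩ b|. -/
open Set

variable {α : Type*}

/-! An element `e ∈ F \ b` lies in some `Fij M x y`, so `x, y ∈ supp_b(F) = F ∩ b` and `e` is in
the closure of `F ∩ b`. Hence the independent set `F ∩ b` spans `F`, i.e. it is a basis of `F`,
and the rank of `F` is its cardinality. -/

section

variable {M : Matroid α} {b I X : Set α}

lemma mRank_eq_ncard_of_isBasis (hI : M.IsBasis I X) (hIfin : I.Finite) :
    mRank M X = I.ncard := by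
  refine IsGreatest.csSup_eq ⟨⟨I, hI.indep, hI.subset, rfl⟩, ?_⟩
  rintro _ ⟨J, hJ, hJX, rfl⟩
  have hJI : J.encard ≤ I.encard := hI.encard_eq_eRk ▸ hJ.encard_le_eRk_of_subset hJX
  exact ENat.toNat_le_toNat hJI hIfin.encard_lt_top.ne

lemma pair_subset_suppb {S : Set α} {x y : α} (hx : x ∈ b) (hy : y ∈ b) (hxy : x ≠ y)
    (hS : (S ∩ Fij M x y).Nonempty) : ({x, y} : Set α) ⊆ suppb M b S := by
  intro z hz
  refine Or.inr ?_
  simp only [mem_iUnion]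
  exact ⟨x, hx, y, hy, hxy, hS, hz⟩

lemma IsCremonaBasis.subset_closure_inter (hb : IsCremonaBasis M b) {F : Set α} (hFE : F ⊆ M.E)
    (hFb : suppb M b F ⊆ F ∩ b) : F ⊆ M.closure (F ∩ b) := by
  intro e heF
  by_cases heb : e ∈ b
  · exact M.subset_closure (F ∩ b) (inter_subset_left.trans hFE) ⟨heF, heb⟩
  obtain ⟨x, hx, y, hy, hxy, heFij⟩ : ∃ x ∈ b, ∃ y ∈ b, x ≠ y ∧ e ∈ Fij M x y := by
    have he : e ∈ M.E \ b := ⟨hFE heF, heb⟩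
    simpa only [← hb.2.2, mem_iUnion, exists_prop] using he
  have hxyF := (pair_subset_suppb hx hy hxy ⟨e, heF, heFij⟩).trans hFb
  exact M.closure_subset_closure hxyF heFij.1

lemma IsCremonaBasis.isBasis_inter (hb : IsCremonaBasis M b) {F : Set α} (hFE : F ⊆ M.E)
    (hFb : suppb M b F ⊆ F ∩ b) : M.IsBasis (F ∩ b) F :=
  (hb.1.indep.subset inter_subset_right).isBasis_of_subset_of_subset_closure inter_subset_left
    (hb.subset_closure_inter hFE hFb)

end


theorem stmt5_general (M : Matroid α) (hfin : M.E.Finite)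
    (b : Set α) (hb : IsCremonaBasis M b)
    (F : Set α) (hF : M.IsFlat F)
    (hFb : F ∩ b = suppb M b F) :
    mRank M F = (F ∩ b).ncard :=
  mRank_eq_ncard_of_isBasis (hb.isBasis_inter hF.subset_ground hFb.ge)
    (hfin.subset (inter_subset_left.trans hF.subset_ground))

/-- A basis flat `F` (nonempty, connected support graph, `F ∩ b = supp_b(F)`)
satisfies `r(F) = |F ∩ b|`. -/
theorem stmt5 (M : Matroid α) (hfin : M.E.Finite) (hsimple : MSimple M)
    (b : Set α) (hb : IsCremonaBasis M b)
    (F : Set α) (hF : M.IsFlat F) (hne : F.Nonempty)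
    (hconn : SuppConnected M b F) (hFb : F ∩ b = suppb M b F) :
    mRank M F = (F ∩ b).ncard :=
  stmt5_general M hfin b hb F hF hFb
end
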